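/- arXiv:1907.12543 — 2 statements merged into one kernel-verified Lean document; each statement's English description precedes it below -/
import Mathlib

section
/- Any two sequences in the class 𝒞 have the same palindromic length sequence: if a : ℕ → α and b : ℕ → β are both in 𝒞 (over possibly different alphabets α and β), then P_a(n) = P_b(n) for every n ∈ ℕ. -/
/-- Membership in the class 𝒞: there exist a letter `c`, bijections `f n`,
and words `w n` with `w 0 = [c]`,
`w (n+1) = w n ++ f n (w n) ++ f n (w n) ++ w n`, `f n (w n) ≠ w n`,
and `w n` is the prefix of `a` of length `4 ^ n`. -/
def InC {α : Type*} (a : ℕ → α) : Prop :=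
  ∃ (c : α) (f : ℕ → α ≃ α) (w : ℕ → List α),
    w 0 = [c] ∧
    (∀ n, w (n + 1) = w n ++ (w n).map (f n) ++ (w n).map (f n) ++ w n) ∧
    (∀ n, (w n).map (f n) ≠ w n) ∧
    (∀ n, w n = (List.range (4 ^ n)).map a)

/-- The factor `a(x) a(x+1) ⋯ a(x+y-1)` of the sequence `a`. -/
def factor {α : Type*} (a : ℕ → α) (x y : ℕ) : List α :=
  (List.range y).map (fun i => a (x + i))

/-- The prefix of `a` of length `n`. -/
def prefixWord {α : Type*} (a : ℕ → α) (n : ℕ) : List α :=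
  factor a 0 n

/-- The palindromic length of a finite word: the least number of palindromes
whose concatenation is the word (0 for the empty word). -/
noncomputable def palLen {α : Type*} (w : List α) : ℕ :=
  sInf {k | ∃ ps : List (List α),
    ps.length = k ∧ (∀ p ∈ ps, p.Palindrome) ∧ ps.flatten = w}

/-- `P a n` is the palindromic length of the prefix of `a` of length `n`. -/
noncomputable def P {α : Type*} (a : ℕ → α) (n : ℕ) : ℕ :=
  palLen (prefixWord a n)

/-- The factor of length `y` at position `x` is embedded into the center of the
factor of length `4 * r` at position `4 * z`. -/
def EmbedCenter (x y z r : ℕ) : Prop :=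
  4 * z ≤ x ∧ x + y ≤ 4 * z + 4 * r ∧ x - 4 * z = (4 * z + 4 * r) - (x + y)

/-- The Thue–Morse sequence: `true` iff the number of ones in the binary
expansion is odd. -/
def thueMorse (n : ℕ) : Bool :=
  (Nat.digits 2 n).count 1 % 2 == 1

/-!
Let `u ∈ 𝒞`. At every level `n`, each aligned block of length
`4 ^ (n + 1)` of `u` consists of four aligned blocks of length `4 ^ n` of the shape `x y y x` with
`x ≠ y` (`IsXYYX`), and this property passes to `blocks u`, the sequence of aligned blocks of
length 4 read as letters. In such a sequence a palindrome of length at least 2 either has length 3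
or is centred at an even position, and then, up to at most three letters at each end, it is the
image of a palindrome of `blocks u`. Passing to `blocks u`, one obtains the recursion
`P(4k) = P(k)`, `P(4k+1) = P(k)+1`, `P(4k+2) = min(P(k), P(k+1)) + 2`,
`P(4k+3) = min(P(k)+2, P(k+1)+1)`, which does not depend on `u`: the upper bounds come from lifting
factorisations of prefixes of `blocks u`, the lower bound from removing the last palindrome `[m, n)`
of an optimal factorisation, for which the recursively defined function `palLenC` satisfies
`palLenC n ≤ palLenC m + 1`.
-/

section Factor
variable {γ : Type*}

@[simp] lemma length_factor (u : ℕ → γ) (x y : ℕ) : (factor u x y).length = y := by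
  simp [factor]

lemma factor_eq_factor_iff {u v : ℕ → γ} {x x' y : ℕ} :
    factor u x y = factor v x' y ↔ ∀ i < y, u (x + i) = v (x' + i) := by
  simp [factor, List.map_inj_left]

lemma factor_add (u : ℕ → γ) (x y z : ℕ) :
    factor u x (y + z) = factor u x y ++ factor u (x + y) z := by
  simp [factor, List.range_add, Nat.add_assoc]

lemma factor_one (u : ℕ → γ) (x : ℕ) : factor u x 1 = [u x] := rfl

end Factor

section Palindromes
variable {γ : Type*} {u : ℕ → γ} {m n : ℕ}

/-- The factor of `u` at the positions `m, …, n - 1` is a palindrome. -/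
def IsPalIco (u : ℕ → γ) (m n : ℕ) : Prop :=
  ∀ x y, m ≤ x → m ≤ y → x + y + 1 = m + n → u x = u y

lemma palindrome_factor_iff (h : m ≤ n) :
    (factor u m (n - m)).Palindrome ↔ IsPalIco u m n := by
  rw [List.Palindrome.iff_reverse_eq, List.ext_getElem_iff]
  simp only [factor, List.length_reverse, List.length_map, List.length_range,
    List.getElem_reverse, List.getElem_map, List.getElem_range, true_and]
  constructor
  · intro hrev x y hx hy hsum
    have := hrev (x - m) (by omega) (by omega)
    rw [show m + (n - m - 1 - (x - m)) = y by omega, show m + (x - m) = x by omega] at this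
    exact this.symm
  · intro hpal i hi _
    exact hpal _ _ (by omega) (by omega) (by omega)

lemma IsPalIco.inner {m' n' : ℕ} (h : IsPalIco u m n) (hm : m ≤ m') (hc : m' + n' = m + n) :
    IsPalIco u m' n' :=
  fun x y hx hy hsum => h x y (by omega) (by omega) (by omega)

end Palindromes

section PalLen
variable {γ : Type*} {u : ℕ → γ} {m n : ℕ}

lemma palLen_le {w : List γ} (ps : List (List γ)) (hp : ∀ p ∈ ps, p.Palindrome)
    (hf : ps.flatten = w) : palLen w ≤ ps.length :=
  Nat.sInf_le ⟨ps, rfl, hp, hf⟩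

lemma exists_palindromes_length_eq_palLen (w : List γ) : ∃ ps : List (List γ),
    ps.length = palLen w ∧ (∀ p ∈ ps, p.Palindrome) ∧ ps.flatten = w := by
  have hne : {k | ∃ ps : List (List γ),
      ps.length = k ∧ (∀ p ∈ ps, p.Palindrome) ∧ ps.flatten = w}.Nonempty :=
    ⟨w.length, w.map ([·]), by simp, by simpa using fun c _ => List.Palindrome.singleton c,
      by simp [← List.flatMap_def]⟩
  exact Nat.sInf_mem hne

lemma palLen_append_le (v w : List γ) : palLen (v ++ w) ≤ palLen v + palLen w := by
  obtain ⟨ps, hps, hpal, rfl⟩ := exists_palindromes_length_eq_palLen v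
  obtain ⟨qs, hqs, hqal, rfl⟩ := exists_palindromes_length_eq_palLen w
  rw [← hps, ← hqs, ← List.length_append]
  exact palLen_le _ (fun p hp => (List.mem_append.mp hp).elim (hpal p) (hqal p))
    List.flatten_append

lemma palLen_le_one {w : List γ} (h : w.Palindrome) : palLen w ≤ 1 :=
  palLen_le [w] (by simpa) (by simp)

lemma P_zero : P u 0 = 0 :=
  Nat.le_zero.mp (palLen_le [] (by simp) rfl)

lemma P_add_le_P_add_palLen (u : ℕ → γ) (m k : ℕ) :
    P u (m + k) ≤ P u m + palLen (factor u m k) := by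
  unfold P prefixWord
  rw [factor_add, zero_add]
  exact palLen_append_le _ _

lemma P_add_le (u : ℕ → γ) (m k : ℕ) : P u (m + k) ≤ P u m + k := by
  induction k with
  | zero => simp
  | succ k ih =>
    rw [← add_assoc]
    have := P_add_le_P_add_palLen u (m + k) 1
    rw [factor_one] at this
    have := palLen_le_one (List.Palindrome.singleton (u (m + k)))
    omega

lemma IsPalIco.P_le (h : IsPalIco u m n) (hmn : m ≤ n) : P u n ≤ P u m + 1 := by
  have := P_add_le_P_add_palLen u m (n - m)
  rw [Nat.add_sub_cancel' hmn] at this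
  have := palLen_le_one ((palindrome_factor_iff hmn).mpr h)
  omega

lemma exists_isPalIco_P_add_one_le (u : ℕ → γ) (hn : 0 < n) :
    ∃ m < n, IsPalIco u m n ∧ P u m + 1 ≤ P u n := by
  obtain ⟨ps, hps, hpal, hflat⟩ := exists_palindromes_length_eq_palLen (factor u 0 n)
  obtain ⟨qs, p, rfl⟩ := (List.eq_nil_or_concat ps).resolve_left (by
    rintro rfl
    have := congrArg List.length hflat
    simp only [List.flatten_nil, List.length_nil, length_factor] at this
    omega)
  rw [List.concat_eq_append, List.flatten_concat] at hflat
  rw [List.concat_eq_append, List.length_append, List.length_singleton] at hps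
  have hp : p ≠ [] := by
    rintro rfl
    have := palLen_le qs (fun q hq => hpal q (by simp [hq])) (by simpa using hflat)
    omega
  have hpn : p.length ≤ n := by
    have := congrArg List.length hflat
    simp only [List.length_append, length_factor] at this
    omega
  have hsplit := factor_add u 0 (n - p.length) p.length
  rw [zero_add, Nat.sub_add_cancel hpn, ← hflat] at hsplit
  obtain ⟨hqs, hpfac⟩ := List.append_inj' hsplit (by simp)
  refine ⟨n - p.length, Nat.sub_lt hn (List.length_pos_iff.mpr hp), ?_, ?_⟩
  · rw [← palindrome_factor_iff (by omega), Nat.sub_sub_self hpn]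
    exact hpfac ▸ hpal _ (by simp)
  · have := palLen_le qs (fun q hq => hpal q (by simp [hq])) hqs
    simp only [P, prefixWord]
    omega

end PalLen

section PalLenC

def palLenC : ℕ → ℕ
  | n =>
    if n = 0 then 0
    else if n % 4 = 0 then palLenC (n / 4)
    else if n % 4 = 1 then palLenC (n / 4) + 1
    else if n % 4 = 2 then min (palLenC (n / 4)) (palLenC (n / 4 + 1)) + 2
    else min (palLenC (n / 4) + 2) (palLenC (n / 4 + 1) + 1)
  decreasing_by all_goals omega

@[simp] lemma palLenC_zero : palLenC 0 = 0 := by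
  rw [palLenC]; simp

lemma palLenC_four_mul (k : ℕ) : palLenC (4 * k) = palLenC k := by
  rcases Nat.eq_zero_or_pos k with rfl | hk
  · rfl
  · rw [palLenC]; simp [hk.ne']

lemma palLenC_four_mul_add_one (k : ℕ) : palLenC (4 * k + 1) = palLenC k + 1 := by
  rw [palLenC]; simp [Nat.add_mod, Nat.add_div]

lemma palLenC_four_mul_add_two (k : ℕ) :
    palLenC (4 * k + 2) = min (palLenC k) (palLenC (k + 1)) + 2 := by
  rw [palLenC]; simp [Nat.add_mod, Nat.add_div]

lemma palLenC_four_mul_add_three (k : ℕ) :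
    palLenC (4 * k + 3) = min (palLenC k + 2) (palLenC (k + 1) + 1) := by
  rw [palLenC]; simp [Nat.add_mod, Nat.add_div]

lemma palLenC_succ_le_and_le_succ (n : ℕ) :
    palLenC (n + 1) ≤ palLenC n + 1 ∧ palLenC n ≤ palLenC (n + 1) + 1 := by
  induction n using Nat.strong_induction_on with
  | _ n ih =>
    obtain ⟨t, r, hr, rfl⟩ : ∃ t r, r < 4 ∧ n = 4 * t + r :=
      ⟨n / 4, n % 4, by omega, by omega⟩
    interval_cases r
    · rw [add_zero, palLenC_four_mul, palLenC_four_mul_add_one]; omega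
    · have := ih t (by omega)
      rw [palLenC_four_mul_add_one, palLenC_four_mul_add_two]; omega
    · rw [palLenC_four_mul_add_two, palLenC_four_mul_add_three]; omega
    · have := ih t (by omega)
      rw [palLenC_four_mul_add_three, show 4 * t + 3 + 1 = 4 * (t + 1) by ring, palLenC_four_mul]
      omega

lemma palLenC_succ_le (n : ℕ) : palLenC (n + 1) ≤ palLenC n + 1 :=
  (palLenC_succ_le_and_le_succ n).1

lemma palLenC_le_succ (n : ℕ) : palLenC n ≤ palLenC (n + 1) + 1 :=
  (palLenC_succ_le_and_le_succ n).2

end PalLenC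

section PalStep

/-- The bound that a palindrome occupying `[m, n)` forces on `palLenC`. The second conjunct
strengthens the induction: the first needs it for palindromes starting at `4 * q + 2`. -/
def PalStep (m n : ℕ) : Prop :=
  palLenC n ≤ palLenC m + 1 ∧
    min (palLenC (n - 1)) (palLenC n) ≤ min (palLenC m) (palLenC (m + 1)) + 1

lemma palStep_self (m : ℕ) : PalStep m m := by
  have := palLenC_le_succ m
  exact ⟨by omega, by omega⟩

lemma palStep_succ (m : ℕ) : PalStep m (m + 1) :=
  ⟨palLenC_succ_le m, by simp⟩

variable {q Q : ℕ}

lemma PalStep.four_mul (h : PalStep q Q) : PalStep (4 * q) (4 * Q) := by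
  obtain _ | K := Q
  · simp [PalStep]
  · unfold PalStep at *
    rw [Nat.add_sub_cancel] at h
    rw [show 4 * (K + 1) - 1 = 4 * K + 3 by omega, palLenC_four_mul, palLenC_four_mul,
      palLenC_four_mul_add_three, palLenC_four_mul_add_one]
    omega

lemma PalStep.four_mul_add_one (h : PalStep q (Q + 1)) : PalStep (4 * q + 1) (4 * Q + 3) := by
  unfold PalStep at *
  rw [Nat.add_sub_cancel] at h
  rw [show 4 * Q + 3 - 1 = 4 * Q + 2 by omega, show 4 * q + 1 + 1 = 4 * q + 2 by omega,
    palLenC_four_mul_add_one, palLenC_four_mul_add_two, palLenC_four_mul_add_two,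
    palLenC_four_mul_add_three]
  omega

lemma PalStep.four_mul_add_two (h : PalStep q (Q + 1)) (h' : PalStep (q + 1) Q) :
    PalStep (4 * q + 2) (4 * Q + 2) := by
  unfold PalStep at *
  rw [Nat.add_sub_cancel] at h
  rw [show 4 * Q + 2 - 1 = 4 * Q + 1 by omega, show 4 * q + 2 + 1 = 4 * q + 3 by omega,
    palLenC_four_mul_add_one, palLenC_four_mul_add_two, palLenC_four_mul_add_two,
    palLenC_four_mul_add_three]
  omega

lemma PalStep.four_mul_add_three (h : PalStep (q + 1) Q) : PalStep (4 * q + 3) (4 * Q + 1) := by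
  unfold PalStep at *
  have := palLenC_succ_le q
  rw [show 4 * Q + 1 - 1 = 4 * Q by omega, show 4 * q + 3 + 1 = 4 * (q + 1) by omega,
    palLenC_four_mul_add_one, palLenC_four_mul, palLenC_four_mul, palLenC_four_mul_add_three]
  omega

lemma palStep_four_mul_add_two_five (p : ℕ) : PalStep (4 * p + 2) (4 * p + 5) := by
  have := palLenC_succ_le p
  unfold PalStep
  rw [show 4 * p + 5 - 1 = 4 * (p + 1) by omega, show 4 * p + 5 = 4 * (p + 1) + 1 by omega,
    show 4 * p + 2 + 1 = 4 * p + 3 by omega, palLenC_four_mul_add_one, palLenC_four_mul,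
    palLenC_four_mul_add_two, palLenC_four_mul_add_three]
  omega

lemma palStep_four_mul_add_three_six (p : ℕ) : PalStep (4 * p + 3) (4 * p + 6) := by
  have := palLenC_succ_le p
  unfold PalStep
  rw [show 4 * p + 6 - 1 = 4 * (p + 1) + 1 by omega, show 4 * p + 6 = 4 * (p + 1) + 2 by omega,
    show 4 * p + 3 + 1 = 4 * (p + 1) by omega, palLenC_four_mul_add_one, palLenC_four_mul,
    palLenC_four_mul_add_two, palLenC_four_mul_add_three]
  omega

end PalStep

section XYYX
variable {γ : Type*} {u : ℕ → γ} {m n : ℕ}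

def IsXYYX (u : ℕ → γ) : Prop :=
  ∀ n p, factor u (4 ^ n * (4 * p)) (4 ^ n) = factor u (4 ^ n * (4 * p + 3)) (4 ^ n) ∧
    factor u (4 ^ n * (4 * p + 1)) (4 ^ n) = factor u (4 ^ n * (4 * p + 2)) (4 ^ n) ∧
    factor u (4 ^ n * (4 * p)) (4 ^ n) ≠ factor u (4 ^ n * (4 * p + 1)) (4 ^ n)

lemma IsXYYX.block_shape (hu : IsXYYX u) (p : ℕ) :
    u (4 * p) = u (4 * p + 3) ∧ u (4 * p + 1) = u (4 * p + 2) ∧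
      u (4 * p) ≠ u (4 * p + 1) := by
  simpa [factor_one] using hu 0 p

lemma IsXYYX.apply_eq_apply_three_sub (hu : IsXYYX u) (p : ℕ) {ρ : ℕ} (hρ : ρ ≤ 3) :
    u (4 * p + ρ) = u (4 * p + (3 - ρ)) := by
  obtain ⟨h03, h12, -⟩ := hu.block_shape p
  interval_cases ρ
  exacts [h03, h12, h12.symm, h03.symm]

lemma IsXYYX.not_isPalIco_two (hu : IsXYYX u) {x : ℕ} (hx : x % 2 = 0) :
    ¬IsPalIco u x (x + 2) := by
  intro h
  have := h x (x + 1) le_rfl (by omega) (by omega)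
  obtain ⟨p, rfl | rfl⟩ : ∃ p, x = 4 * p ∨ x = 4 * p + 2 := ⟨x / 4, by omega⟩ <;>
  · have := hu.block_shape p
    grind

lemma IsXYYX.mod_four_of_isPalIco_three (hu : IsXYYX u) {x : ℕ} (h : IsPalIco u x (x + 3)) :
    x % 4 = 2 ∨ x % 4 = 3 := by
  have := h x (x + 2) le_rfl (by omega) (by omega)
  by_contra hx
  obtain ⟨p, rfl | rfl⟩ : ∃ p, x = 4 * p ∨ x = 4 * p + 1 := ⟨x / 4, by omega⟩ <;>
  · have := hu.block_shape p
    grind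

lemma IsXYYX.not_isPalIco_five (hu : IsXYYX u) (x : ℕ) : ¬IsPalIco u x (x + 5) := by
  intro h
  have := h x (x + 4) le_rfl (by omega) (by omega)
  have := h (x + 1) (x + 3) (by omega) (by omega) (by omega)
  have hx := hu.mod_four_of_isPalIco_three (h.inner (m' := x + 1) (by omega) (by omega))
  obtain ⟨p, rfl | rfl⟩ : ∃ p, x = 4 * p + 1 ∨ x = 4 * p + 2 := ⟨x / 4, by omega⟩ <;>
  · have := hu.block_shape p
    have := hu.block_shape (p + 1)
    grind

lemma IsXYYX.isPalIco_cases (hu : IsXYYX u) (h : IsPalIco u m n) (hmn : m + 2 ≤ n) :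
    (m + n) % 4 = 0 ∨ n = m + 3 ∧ (m % 4 = 2 ∨ m % 4 = 3) := by
  rcases Nat.mod_two_eq_zero_or_one (m + n) with heven | hodd
  · left
    by_contra hmod
    exact hu.not_isPalIco_two (x := (m + n) / 2 - 1) (by omega) (h.inner (by omega) (by omega))
  · right
    have hn : n = m + 3 := by
      by_contra hn
      exact hu.not_isPalIco_five ((m + n) / 2 - 2) (h.inner (by omega) (by omega))
    subst hn
    exact ⟨rfl, hu.mod_four_of_isPalIco_three h⟩

end XYYX

section Blocks
variable {γ : Type*} {u : ℕ → γ} {m n q Q : ℕ}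

def blocks (u : ℕ → γ) (p : ℕ) : List γ :=
  factor u (4 * p) 4

lemma blocks_eq_blocks_iff {s s' : ℕ} :
    blocks u s = blocks u s' ↔ ∀ ρ < 4, u (4 * s + ρ) = u (4 * s' + ρ) :=
  factor_eq_factor_iff

lemma factor_blocks_eq_iff {s s' y : ℕ} :
    factor (blocks u) s y = factor (blocks u) s' y ↔
      factor u (4 * s) (4 * y) = factor u (4 * s') (4 * y) := by
  simp only [factor_eq_factor_iff, blocks_eq_blocks_iff]
  constructor
  · intro h j hj
    have := h (j / 4) (by omega) (j % 4) (by omega)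
    rwa [show 4 * (s + j / 4) + j % 4 = 4 * s + j by omega,
      show 4 * (s' + j / 4) + j % 4 = 4 * s' + j by omega] at this
  · intro h i hi ρ hρ
    have := h (4 * i + ρ) (by omega)
    rwa [show 4 * s + (4 * i + ρ) = 4 * (s + i) + ρ by ring,
      show 4 * s' + (4 * i + ρ) = 4 * (s' + i) + ρ by ring] at this

lemma IsXYYX.isXYYX_blocks (hu : IsXYYX u) : IsXYYX (blocks u) := by
  intro n p
  have key : ∀ s s',
      factor (blocks u) (4 ^ n * s) (4 ^ n) = factor (blocks u) (4 ^ n * s') (4 ^ n) ↔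
        factor u (4 ^ (n + 1) * s) (4 ^ (n + 1)) = factor u (4 ^ (n + 1) * s') (4 ^ (n + 1)) := by
    intro s s'
    rw [factor_blocks_eq_iff, pow_succ', mul_assoc, mul_assoc]
  rw [key, key, Ne, key]
  exact hu (n + 1) p

lemma IsXYYX.isPalIco_four_mul (hu : IsXYYX u) (h : IsPalIco (blocks u) m n) :
    IsPalIco u (4 * m) (4 * n) := by
  intro x y hx hy hsum
  have hblk := blocks_eq_blocks_iff.mp
    (h (x / 4) (y / 4) (by omega) (by omega) (by omega)) (x % 4) (by omega)
  rw [hu.apply_eq_apply_three_sub (y / 4) (by omega : x % 4 ≤ 3)] at hblk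
  rwa [show 4 * (x / 4) + x % 4 = x by omega,
    show 4 * (y / 4) + (3 - x % 4) = y by omega] at hblk

lemma IsXYYX.blocks_isPalIco (hu : IsXYYX u) {r : ℕ} (hr : r ≤ 2)
    (h : IsPalIco u (4 * q + r) (4 * Q - r)) : IsPalIco (blocks u) q Q := by
  intro s s' hs hs' hsum
  obtain rfl | hss := eq_or_ne s s'
  · rfl
  refine blocks_eq_blocks_iff.mpr fun ρ hρ => ?_
  by_cases hA : 4 * q + r ≤ 4 * s + ρ ∧ 4 * q + r ≤ 4 * s' + (3 - ρ)
  · rw [h _ (4 * s' + (3 - ρ)) (by omega) (by omega) (by omega),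
      ← hu.apply_eq_apply_three_sub s' (by omega)]
  · rw [hu.apply_eq_apply_three_sub s (by omega),
      h _ (4 * s' + ρ) (by omega) (by omega) (by omega)]

lemma IsXYYX.blocks_isPalIco_of_four_mul_add_three (hu : IsXYYX u)
    (h : IsPalIco u (4 * q + 3) (4 * Q + 1)) : IsPalIco (blocks u) (q + 1) Q := by
  intro s s' hs hs' hsum
  refine blocks_eq_blocks_iff.mpr fun ρ hρ => ?_
  rw [h _ (4 * s' + (3 - ρ)) (by omega) (by omega) (by omega),
    ← hu.apply_eq_apply_three_sub s' (by omega)]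

lemma IsXYYX.isPalIco_four_mul_add_one (hu : IsXYYX u) (p : ℕ) :
    IsPalIco u (4 * p + 1) (4 * p + 3) := by
  intro x y hx hy hsum
  obtain ⟨rfl, rfl⟩ | ⟨rfl, rfl⟩ :
      x = 4 * p + 1 ∧ y = 4 * p + 2 ∨ x = 4 * p + 2 ∧ y = 4 * p + 1 := by omega
  · exact (hu.block_shape p).2.1
  · exact (hu.block_shape p).2.1.symm

end Blocks

section Bounds
variable {γ : Type*} {u : ℕ → γ} {m n : ℕ}

lemma IsXYYX.palStep_of_isPalIco_blocks (hu : IsXYYX u) (h : IsPalIco u m n) (hmn : m + 2 ≤ n)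
    (ih : ∀ m' n', n' < n → m' ≤ n' → IsPalIco (blocks u) m' n' → PalStep m' n') :
    PalStep m n := by
  rcases hu.isPalIco_cases h hmn with hmod | ⟨rfl, hm | hm⟩
  · obtain ⟨q, r, hr, rfl⟩ : ∃ q r, r < 4 ∧ m = 4 * q + r :=
      ⟨m / 4, m % 4, by omega, by omega⟩
    interval_cases r
    · obtain ⟨Q, rfl⟩ : ∃ Q, n = 4 * Q := ⟨n / 4, by omega⟩
      have hb := hu.blocks_isPalIco (r := 0) (Q := Q) (by norm_num) (by simpa using h)
      exact (ih q Q (by omega) (by omega) hb).four_mul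
    · obtain ⟨K, rfl⟩ : ∃ K, n = 4 * K + 3 := ⟨n / 4, by omega⟩
      have hb := hu.blocks_isPalIco (r := 1) (Q := K + 1) (by norm_num)
        (by rwa [show 4 * (K + 1) - 1 = 4 * K + 3 by omega])
      exact (ih q (K + 1) (by omega) (by omega) hb).four_mul_add_one
    · obtain ⟨K, rfl⟩ : ∃ K, n = 4 * K + 2 := ⟨n / 4, by omega⟩
      have hb := hu.blocks_isPalIco (r := 2) (Q := K + 1) le_rfl
        (by rwa [show 4 * (K + 1) - 2 = 4 * K + 2 by omega])
      exact (ih q (K + 1) (by omega) (by omega) hb).four_mul_add_two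
        (ih (q + 1) K (by omega) (by omega) (hb.inner (by omega) (by omega)))
    · obtain ⟨Q, rfl⟩ : ∃ Q, n = 4 * Q + 1 := ⟨n / 4, by omega⟩
      exact (ih (q + 1) Q (by omega) (by omega)
        (hu.blocks_isPalIco_of_four_mul_add_three h)).four_mul_add_three
  · obtain ⟨p, rfl⟩ : ∃ p, m = 4 * p + 2 := ⟨m / 4, by omega⟩
    exact palStep_four_mul_add_two_five p
  · obtain ⟨p, rfl⟩ : ∃ p, m = 4 * p + 3 := ⟨m / 4, by omega⟩
    exact palStep_four_mul_add_three_six p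

theorem IsXYYX.palStep (hu : IsXYYX u) (h : IsPalIco u m n) (hmn : m ≤ n) : PalStep m n := by
  induction n using Nat.strong_induction_on generalizing γ m with
  | _ n ih =>
    obtain rfl | rfl | hmn := (by omega : n = m ∨ n = m + 1 ∨ m + 2 ≤ n)
    · exact palStep_self n
    · exact palStep_succ m
    · exact hu.palStep_of_isPalIco_blocks h hmn
        fun m' n' hn' hmn' h' => ih n' hn' hu.isXYYX_blocks h' hmn'

theorem IsXYYX.palLenC_le_P (hu : IsXYYX u) (n : ℕ) : palLenC n ≤ P u n := by
  induction n using Nat.strong_induction_on with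
  | _ n ih =>
    rcases Nat.eq_zero_or_pos n with rfl | hn
    · simp
    obtain ⟨m, hm, h, hP⟩ := exists_isPalIco_P_add_one_le u hn
    have := (hu.palStep h hm.le).1
    have := ih m hm
    omega

lemma IsXYYX.P_four_mul_sub_le (hu : IsXYYX u) {r : ℕ} (hr : r ≤ 2) (k : ℕ) :
    P u (4 * k - r) ≤ P (blocks u) k + r := by
  induction k using Nat.strong_induction_on generalizing r with
  | _ k ih =>
    rcases Nat.eq_zero_or_pos k with rfl | hk
    · simp [P_zero]
    obtain ⟨m, hm, h, hP⟩ := exists_isPalIco_P_add_one_le (blocks u) hk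
    have hpal := (hu.isPalIco_four_mul h).inner (m' := 4 * m + r) (n' := 4 * k - r)
      (by omega) (by omega)
    have := hpal.P_le (by omega)
    have := P_add_le u (4 * m) r
    have := ih m hm (r := 0) (by norm_num)
    simp only [Nat.sub_zero, add_zero] at this
    omega

theorem IsXYYX.P_le_palLenC (hu : IsXYYX u) (n : ℕ) : P u n ≤ palLenC n := by
  induction n using Nat.strong_induction_on generalizing γ with
  | _ n ih =>
    obtain ⟨t, r, hr, rfl⟩ : ∃ t r, r < 4 ∧ n = 4 * t + r :=
      ⟨n / 4, n % 4, by omega, by omega⟩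
    have hP4 : P u (4 * t) ≤ palLenC t := by
      rcases Nat.eq_zero_or_pos t with rfl | ht
      · simp [P_zero]
      · simpa using (hu.P_four_mul_sub_le (r := 0) (by norm_num) t).trans
          (ih t (by omega) hu.isXYYX_blocks)
    interval_cases r
    · simpa [palLenC_four_mul] using hP4
    · rw [palLenC_four_mul_add_one]
      exact (P_add_le u (4 * t) 1).trans (by omega)
    · have := P_add_le u (4 * t) 2
      have := hu.P_four_mul_sub_le (r := 2) (by norm_num) (t + 1)
      have := ih (t + 1) (by omega) hu.isXYYX_blocks
      rw [palLenC_four_mul_add_two, show 4 * (t + 1) - 2 = 4 * t + 2 by omega] at *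
      omega
    · have := (hu.isPalIco_four_mul_add_one t).P_le (by omega)
      have := P_add_le u (4 * t) 1
      have := hu.P_four_mul_sub_le (r := 1) (by norm_num) (t + 1)
      have := ih (t + 1) (by omega) hu.isXYYX_blocks
      rw [palLenC_four_mul_add_three, show 4 * (t + 1) - 1 = 4 * t + 3 by omega] at *
      omega

end Bounds

section ClassC
variable {γ : Type*}

lemma factor_four_mul_eq_append {u : ℕ → γ} {x L : ℕ} {W₁ W₂ W₃ W₄ : List γ}
    (h₁ : W₁.length = L) (h₂ : W₂.length = L) (h₃ : W₃.length = L)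
    (h : factor u x (4 * L) = W₁ ++ W₂ ++ W₃ ++ W₄) :
    factor u x L = W₁ ∧ factor u (x + L) L = W₂ ∧ factor u (x + 2 * L) L = W₃ ∧
      factor u (x + 3 * L) L = W₄ := by
  rw [show 4 * L = L + L + L + L by ring, factor_add, factor_add, factor_add] at h
  obtain ⟨h123, h4⟩ := List.append_inj h (by simp [h₁, h₂, h₃])
  obtain ⟨h12, h3⟩ := List.append_inj h123 (by simp [h₁, h₂])
  obtain ⟨h1, h2⟩ := List.append_inj h12 (by simp [h₁])
  refine ⟨h1, h2, ?_, ?_⟩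
  · rwa [show x + 2 * L = x + (L + L) by ring]
  · rwa [show x + 3 * L = x + (L + L + L) by ring]

variable {a : ℕ → γ} {f : ℕ → γ ≃ γ} {w : ℕ → List γ}

lemma factor_quarters (hrec : ∀ n, w (n + 1) = w n ++ (w n).map (f n) ++ (w n).map (f n) ++ w n)
    (hpref : ∀ n, factor a 0 (4 ^ n) = w n) {n p : ℕ} {e : γ ≃ γ}
    (he : factor a (4 ^ (n + 1) * p) (4 ^ (n + 1)) = (w (n + 1)).map e) :
    factor a (4 ^ n * (4 * p)) (4 ^ n) = (w n).map e ∧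
      factor a (4 ^ n * (4 * p + 1)) (4 ^ n) = ((w n).map (f n)).map e ∧
      factor a (4 ^ n * (4 * p + 2)) (4 ^ n) = ((w n).map (f n)).map e ∧
      factor a (4 ^ n * (4 * p + 3)) (4 ^ n) = (w n).map e := by
  have hlen : (w n).length = 4 ^ n := by rw [← hpref, length_factor]
  rw [hrec, pow_succ', mul_assoc] at he
  simp only [List.map_append] at he
  have := factor_four_mul_eq_append (by simp [hlen]) (by simp [hlen]) (by simp [hlen]) he
  rw [show 4 ^ n * (4 * p) = 4 * (4 ^ n * p) by ring,
    show 4 ^ n * (4 * p + 1) = 4 * (4 ^ n * p) + 4 ^ n by ring,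
    show 4 ^ n * (4 * p + 2) = 4 * (4 ^ n * p) + 2 * 4 ^ n by ring,
    show 4 ^ n * (4 * p + 3) = 4 * (4 ^ n * p) + 3 * 4 ^ n by ring]
  exact this

lemma exists_equiv_factor_eq_map
    (hrec : ∀ n, w (n + 1) = w n ++ (w n).map (f n) ++ (w n).map (f n) ++ w n)
    (hpref : ∀ n, factor a 0 (4 ^ n) = w n) (n q : ℕ) :
    ∃ e : γ ≃ γ, factor a (4 ^ n * q) (4 ^ n) = (w n).map e := by
  suffices ∀ k n q, q < 4 ^ k →
      ∃ e : γ ≃ γ, factor a (4 ^ n * q) (4 ^ n) = (w n).map e from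
    this q n q (Nat.lt_pow_self (by norm_num))
  intro k
  induction k with
  | zero =>
    intro n q hq
    obtain rfl : q = 0 := by simpa using hq
    exact ⟨Equiv.refl γ, by simp [hpref]⟩
  | succ k ih =>
    intro n q hq
    obtain ⟨q₀, j, hj, rfl⟩ : ∃ q₀ j, j < 4 ∧ q = 4 * q₀ + j :=
      ⟨q / 4, q % 4, by omega, by omega⟩
    obtain ⟨e, he⟩ := ih (n + 1) q₀ (by rw [pow_succ] at hq; omega)
    obtain ⟨h0, h1, h2, h3⟩ := factor_quarters hrec hpref he
    rw [List.map_map, ← Equiv.coe_trans] at h1 h2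
    interval_cases j
    exacts [⟨e, h0⟩, ⟨_, h1⟩, ⟨_, h2⟩, ⟨e, h3⟩]

theorem InC.isXYYX (ha : InC a) : IsXYYX a := by
  obtain ⟨-, f, w, -, hrec, hne, hpref⟩ := ha
  have hpref' : ∀ n, factor a 0 (4 ^ n) = w n := fun n => by simp [factor, hpref]
  intro n p
  obtain ⟨e, he⟩ := exists_equiv_factor_eq_map hrec hpref' (n + 1) p
  obtain ⟨h0, h1, h2, h3⟩ := factor_quarters hrec hpref' he
  rw [h0, h1, h2, h3]
  exact ⟨rfl, rfl, fun h => hne n (List.map_injective_iff.mpr e.injective h).symm⟩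

theorem InC.P_eq_palLenC (ha : InC a) (n : ℕ) : P a n = palLenC n :=
  le_antisymm (ha.isXYYX.P_le_palLenC n) (ha.isXYYX.palLenC_le_P n)

end ClassC

theorem stmt11 {α β : Type*} (a : ℕ → α) (b : ℕ → β)
    (ha : InC a) (hb : InC b) :
    ∀ n : ℕ, P a n = P b n := by
  intro n
  rw [ha.P_eq_palLenC, hb.P_eq_palLenC]
end

section
/- Let a : ℕ → α be a sequence in the class 𝒞 and let P_a(n) denote the palindromic length of its prefix of length n. Then: (1) P_a(n+1) ≤ P_a(n) + 1 for every n; (2) if n satisfies P_a(n+1) + 2 = P_a(n+2) + 1 = P_a(n+3), then n ≡ 3 (mod 4); (3) if P_a(4k+1) = P_a(4k+4), then P_a(4k+2) = P_a(4k+3) = P_a(4k+4) + 1; (4) if P_a(4k+1) = P_a(4k+2), then P_a(4k+1) = P_a(4k+4) + 2. -/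
/-!
Every aligned block `a (4k) ⋯ a (4k+3)` of a sequence in 𝒞 has the form `xyyx` with `x ≠ y`:
`w 1 = c (f c) (f c) c`, and each quarter of `w (n+1)` is a letterwise bijective image of `w n`.
This local structure alone controls the palindromes of `a`: squares `a i = a (i+1)` occur only
at `i ≡ 1, 3 (mod 4)`, so even palindromes have their centre at an even position, odd ones have
length at most 3, and a palindrome centred inside a block extends to one bounded by block
boundaries. Splitting off the last palindrome of an optimal factorisation of a prefix, a strong
induction on `k` pins down `P a` on `4k, …, 4k+4` (`BlockProfile`), and the four claims are read
off from that profile.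
-/

theorem exists_eq_four_mul_add (n : ℕ) : ∃ k r, r < 4 ∧ n = 4 * k + r :=
  ⟨n / 4, n % 4, by omega, by omega⟩

section

variable {α : Type*}

theorem palLen_le_length {w : List α} {ps : List (List α)} (hps : ∀ p ∈ ps, p.Palindrome)
    (hw : ps.flatten = w) : palLen w ≤ ps.length :=
  Nat.sInf_le ⟨ps, rfl, hps, hw⟩

theorem exists_palLen_eq (w : List α) :
    ∃ ps : List (List α),
      ps.length = palLen w ∧ (∀ p ∈ ps, p.Palindrome) ∧ ps.flatten = w :=
  Nat.sInf_mem (s := {k | ∃ ps : List (List α),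
    ps.length = k ∧ (∀ p ∈ ps, p.Palindrome) ∧ ps.flatten = w})
    ⟨w.length, w.map ([·]), by simp,
      fun p hp => by obtain ⟨c, -, rfl⟩ := List.mem_map.mp hp; exact .singleton c,
      by simp [← List.flatMap_def]⟩

theorem palLen_append_le_s13 {u p : List α} (hp : p.Palindrome) :
    palLen (u ++ p) ≤ palLen u + 1 := by
  obtain ⟨ps, hlen, hps, rfl⟩ := exists_palLen_eq u
  rw [← hlen, ← List.length_concat]
  exact palLen_le_length (by simpa [or_imp, forall_and] using And.intro hps hp) (by simp)

theorem exists_palLen_eq_succ {w : List α} (hw : w ≠ []) :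
    ∃ u p, p.Palindrome ∧ u ++ p = w ∧ palLen w = palLen u + 1 := by
  obtain ⟨ps, hlen, hps, hflat⟩ := exists_palLen_eq w
  rcases List.eq_nil_or_concat ps with rfl | ⟨qs, p, rfl⟩
  · exact absurd hflat.symm hw
  have hp : p.Palindrome := hps p (by simp)
  have hqs : palLen qs.flatten ≤ qs.length :=
    palLen_le_length (fun q hq => hps q (by simp [hq])) rfl
  have hw' : palLen w ≤ palLen qs.flatten + 1 := by
    simpa [← hflat] using palLen_append_le_s13 (u := qs.flatten) hp
  refine ⟨qs.flatten, p, hp, by simpa using hflat, ?_⟩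
  rw [List.length_concat] at hlen
  omega

def PalFactor (a : ℕ → α) (i j : ℕ) : Prop :=
  ∀ p, i ≤ p → p < j → a p = a (i + j - 1 - p)

section PalFactor

variable {a : ℕ → α} {i j : ℕ}

theorem palFactor_iff (hij : i ≤ j) : PalFactor a i j ↔ (factor a i (j - i)).Palindrome := by
  rw [List.Palindrome.iff_reverse_eq, List.ext_getElem_iff]
  simp only [List.length_reverse, List.getElem_reverse, factor, List.length_map,
    List.length_range, List.getElem_map, List.getElem_range, true_and]
  constructor
  · intro h t ht _
    rw [h (i + t) (by omega) (by omega)]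
    congr 1
    omega
  · intro h p hp hpj
    have hp' := h (p - i) (by omega) (by omega)
    rw [show i + (p - i) = p by omega] at hp'
    rw [← hp']
    congr 1
    omega

theorem PalFactor.eq (h : PalFactor a i j) {p q : ℕ} (hp : i ≤ p) (hpj : p < j)
    (hpq : p + q + 1 = i + j) : a p = a q := by
  rw [h p hp hpj]
  congr 1
  omega

theorem PalFactor.concentric {i' j' : ℕ} (h : PalFactor a i j) (hi : i ≤ i')
    (hc : i' + j' = i + j) :
    PalFactor a i' j' := by
  intro p hp hpj
  rw [hc]
  exact h p (by omega) (by omega)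

theorem PalFactor.extend (h : PalFactor a (i + 1) j) (he : a i = a j) : PalFactor a i (j + 1) := by
  intro p hp hpj
  rcases Nat.lt_or_ge p (i + 1) with hpi | hpi
  · obtain rfl : p = i := by omega
    rwa [show p + (j + 1) - 1 - p = j by omega]
  rcases Nat.lt_or_ge p j with hpj' | hpj'
  · rw [h p hpi hpj']
    congr 1
    omega
  · obtain rfl : p = j := by omega
    rw [show i + (p + 1) - 1 - p = i by omega, he]

theorem palFactor_add_two (h : a i = a (i + 1)) : PalFactor a i (i + 2) :=
  PalFactor.extend (fun _ hp hpj => absurd hpj (by omega)) h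

end PalFactor

section PalLength

variable {a : ℕ → α}

theorem prefixWord_add (m n : ℕ) : prefixWord a (m + n) = prefixWord a m ++ factor a m n := by
  simp only [prefixWord, factor, List.range_add, List.map_append, List.map_map, zero_add]
  rfl

theorem P_le_of_palFactor {i n : ℕ} (h : PalFactor a i n) (hin : i ≤ n) :
    P a n ≤ P a i + 1 := by
  obtain ⟨l, rfl⟩ := Nat.exists_eq_add_of_le hin
  rw [P, prefixWord_add]
  have hpal := (palFactor_iff hin).mp h
  rw [Nat.add_sub_cancel_left] at hpal
  exact palLen_append_le_s13 hpal

theorem P_succ_le (n : ℕ) : P a (n + 1) ≤ P a n + 1 :=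
  P_le_of_palFactor (fun p _ _ => by rw [show n + (n + 1) - 1 - p = p by omega]) n.le_succ

theorem exists_P_eq_succ {n : ℕ} (hn : 0 < n) :
    ∃ i < n, PalFactor a i n ∧ P a n = P a i + 1 := by
  have hw : prefixWord a n ≠ [] := by
    simpa [prefixWord, factor, ← List.length_eq_zero_iff] using hn.ne'
  obtain ⟨u, p, hp, hup, hP⟩ := exists_palLen_eq_succ hw
  have hlen : u.length + p.length = n := by
    simpa [prefixWord, factor] using congrArg List.length hup
  have hsplit := prefixWord_add (a := a) u.length p.length
  rw [hlen, ← hup] at hsplit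
  obtain ⟨hu, hpf⟩ := List.append_inj hsplit (by simp [prefixWord, factor])
  have hpos : p ≠ [] := by
    rintro rfl
    rw [List.append_nil] at hup
    rw [← hup] at hP
    omega
  refine ⟨u.length, by have := List.length_pos_iff.mpr hpos; omega,
    (palFactor_iff (by omega)).mpr ?_, by rw [P, P, ← hu]; exact hP⟩
  rwa [← hlen, Nat.add_sub_cancel_left, ← hpf]

theorem P_le_succ (n : ℕ) : P a n ≤ P a (n + 1) + 1 := by
  obtain ⟨i, hi, hpal, hP⟩ := exists_P_eq_succ (by omega : 0 < n + 1)
  rcases Nat.lt_or_ge i n with hin | hin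
  · have hinner : PalFactor a (i + 1) n := hpal.concentric (by omega) (by omega)
    have := P_le_of_palFactor hinner hin
    have := P_succ_le (a := a) i
    omega
  · obtain rfl : i = n := by omega
    omega

end PalLength

structure BlockProfile (a : ℕ → α) (k : ℕ) : Prop where
  one_eq : P a (4 * k + 1) = P a (4 * k) + 1
  one_le_two : P a (4 * k + 1) ≤ P a (4 * k + 2)
  three_le_two : P a (4 * k + 3) ≤ P a (4 * k + 2)
  three_eq : P a (4 * k + 3) = P a (4 * (k + 1)) + 1
  three_add_one_of_two_eq :
    P a (4 * k + 2) = P a (4 * k + 1) → P a (4 * k + 3) + 1 = P a (4 * k + 2)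

def AbbaBlock (a : ℕ → α) (k : ℕ) : Prop :=
  a (4 * k) ≠ a (4 * k + 1) ∧ a (4 * k + 1) = a (4 * k + 2) ∧ a (4 * k + 3) = a (4 * k)

section AbbaBlocks

variable {a : ℕ → α} (ha : ∀ k, AbbaBlock a k)
include ha

theorem mod_four_of_eq_succ {i : ℕ} (h : a i = a (i + 1)) : i % 4 = 1 ∨ i % 4 = 3 := by
  obtain ⟨m, r, hr, rfl⟩ := exists_eq_four_mul_add i
  obtain ⟨hne, h12, h30⟩ := ha m
  interval_cases r
  · exact absurd h hne
  · omega
  · exact absurd (h30.symm.trans (h.symm.trans h12.symm)) hne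
  · omega

theorem mod_four_of_eq_add_two {i : ℕ} (h : a i = a (i + 2)) : i % 4 = 2 ∨ i % 4 = 3 := by
  obtain ⟨m, r, hr, rfl⟩ := exists_eq_four_mul_add i
  obtain ⟨hne, h12, h30⟩ := ha m
  interval_cases r
  · exact absurd (h.trans h12.symm) hne
  · exact absurd (h.trans h30).symm hne
  · omega
  · omega

theorem not_palFactor_five (i : ℕ) : ¬ PalFactor a i (i + 5) := by
  intro h
  obtain ⟨m, r, hr, rfl⟩ := exists_eq_four_mul_add i
  have h13 : a (4 * m + r + 1) = a (4 * m + r + 1 + 2) := h.eq (by omega) (by omega) (by omega)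
  rcases mod_four_of_eq_add_two ha h13 with hr' | hr'
  · obtain rfl : r = 1 := by omega
    have e1 : a (4 * m + 2) = a (4 * (m + 1)) := h.eq (by omega) (by omega) (by omega)
    have e2 : a (4 * m + 1) = a (4 * (m + 1) + 1) := h.eq (by omega) (by omega) (by omega)
    exact (ha (m + 1)).1 (e1.symm.trans ((ha m).2.1.symm.trans e2))
  · obtain rfl : r = 2 := by omega
    have e1 : a (4 * m + 3) = a (4 * (m + 1) + 1) := h.eq (by omega) (by omega) (by omega)
    have e2 : a (4 * m + 2) = a (4 * (m + 1) + 2) := h.eq (by omega) (by omega) (by omega)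
    obtain ⟨hne, h12, h30⟩ := ha m
    exact hne (h30.symm.trans (e1.trans ((ha (m + 1)).2.1.trans (e2.symm.trans h12.symm))))

theorem palFactor_cases {i n : ℕ} (h : PalFactor a i n) (hin : i < n) :
    n = i + 1 ∨ (n = i + 3 ∧ (n % 4 = 1 ∨ n % 4 = 2)) ∨ (i + n) % 4 = 0 := by
  obtain ⟨c, hc | hc⟩ := Nat.even_or_odd' (i + n)
  · have hsq : a (c - 1) = a (c - 1 + 1) := h.eq (by omega) (by omega) (by omega)
    have := mod_four_of_eq_succ ha hsq
    omega
  rcases Nat.lt_or_ge n (i + 5) with hn | hn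
  · rcases (by omega : n = i + 1 ∨ n = i + 3) with rfl | rfl
    · exact .inl rfl
    · have hsq : a i = a (i + 2) := h.eq (by omega) (by omega) (by omega)
      have := mod_four_of_eq_add_two ha hsq
      omega
  · exact (not_palFactor_five ha (c - 2) (h.concentric (by omega) (by omega))).elim

theorem PalFactor.extend_four_mul_add_one {j k : ℕ} (h : PalFactor a (4 * j + 1) (4 * k + 3))
    (hjk : j ≤ k) : PalFactor a (4 * j) (4 * k + 4) := by
  refine h.extend ?_
  rcases hjk.eq_or_lt with rfl | hjk
  · exact (ha j).2.2.symm
  · calc a (4 * j) = a (4 * j + 3) := (ha j).2.2.symm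
      _ = a (4 * k) := h.eq (by omega) (by omega) (by omega)
      _ = a (4 * k + 3) := (ha k).2.2.symm

theorem PalFactor.extend_four_mul_add_two {j k : ℕ} (h : PalFactor a (4 * j + 2) (4 * k + 2))
    (hjk : j < k) : PalFactor a (4 * j + 1) (4 * k + 3) :=
  h.extend <| calc a (4 * j + 1) = a (4 * j + 2) := (ha j).2.1
    _ = a (4 * k + 1) := h.eq (by omega) (by omega) (by omega)
    _ = a (4 * k + 2) := (ha k).2.1

section Induction

variable {k : ℕ} (IH : ∀ j < k, BlockProfile a j)
include IH

theorem P_four_mul_add_one : P a (4 * k + 1) = P a (4 * k) + 1 := by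
  obtain ⟨i, hi, hpal, hP⟩ := exists_P_eq_succ (by omega : 0 < 4 * k + 1)
  have := P_succ_le (a := a) (4 * k)
  rcases palFactor_cases ha hpal hi with hi1 | ⟨hi3, -⟩ | hi4
  · obtain rfl : i = 4 * k := by omega
    exact hP
  · obtain ⟨m, rfl⟩ : ∃ m, k = m + 1 := ⟨k - 1, by omega⟩
    obtain rfl : i = 4 * m + 2 := by omega
    have := (IH m (by omega)).three_le_two
    have := (IH m (by omega)).three_eq
    omega
  · obtain ⟨j, rfl, hjk⟩ : ∃ j, i = 4 * j + 3 ∧ j < k := ⟨i / 4, by omega, by omega⟩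
    have : P a (4 * k) ≤ P a (4 * (j + 1)) + 1 :=
      P_le_of_palFactor (hpal.concentric (by omega) (by omega)) (by omega)
    have := (IH j hjk).three_eq
    omega

theorem P_four_mul_add_two_cases :
    P a (4 * k + 2) = P a (4 * k + 1) + 1 ∨
      ∃ j < k, PalFactor a (4 * j + 2) (4 * k + 2) ∧ P a (4 * k + 2) = P a (4 * j + 2) + 1 := by
  obtain ⟨i, hi, hpal, hP⟩ := exists_P_eq_succ (by omega : 0 < 4 * k + 2)
  rcases palFactor_cases ha hpal hi with hi1 | ⟨hi3, -⟩ | hi4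
  · obtain rfl : i = 4 * k + 1 := by omega
    exact .inl hP
  · have := P_four_mul_add_one ha IH
    obtain ⟨m, rfl⟩ : ∃ m, k = m + 1 := ⟨k - 1, by omega⟩
    obtain rfl : i = 4 * m + 3 := by omega
    have := (IH m (by omega)).three_eq
    omega
  · obtain ⟨j, rfl, hjk⟩ : ∃ j, i = 4 * j + 2 ∧ j < k := ⟨i / 4, by omega, by omega⟩
    exact .inr ⟨j, hjk, hpal, hP⟩

theorem P_four_mul_add_one_le_two : P a (4 * k + 1) ≤ P a (4 * k + 2) := by
  rcases P_four_mul_add_two_cases ha IH with h | ⟨j, hjk, hpal, hP⟩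
  · omega
  have : P a (4 * k) ≤ P a (4 * (j + 1)) + 1 :=
    P_le_of_palFactor (hpal.concentric (by omega) (by omega)) (by omega)
  have := (IH j hjk).three_le_two
  have := (IH j hjk).three_eq
  have := P_four_mul_add_one ha IH
  omega

theorem P_four_mul_add_three_of_eq (h : P a (4 * k + 2) = P a (4 * k + 1)) :
    P a (4 * k + 3) + 1 = P a (4 * k + 2) := by
  rcases P_four_mul_add_two_cases ha IH with h' | ⟨j, hjk, hpal, hP⟩
  · omega
  have hj := IH j hjk
  -- `P(4k+2) = P(4k)+1 ≤ P(4j+4)+2 ≤ P(4j+3)+1 ≤ P(4j+2)+1 = P(4k+2)` is tight, so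
  -- `P(4j+3) = P(4j+2)`, which by the profile at `j` forces `P(4j+2) = P(4j+1)+1`.
  have : P a (4 * k) ≤ P a (4 * (j + 1)) + 1 :=
    P_le_of_palFactor (hpal.concentric (by omega) (by omega)) (by omega)
  have : P a (4 * k + 3) ≤ P a (4 * j + 1) + 1 :=
    P_le_of_palFactor (hpal.extend_four_mul_add_two ha hjk) (by omega)
  have := P_four_mul_add_one ha IH
  have : P a (4 * k + 2) ≤ P a (4 * k + 3) + 1 := P_le_succ _
  have : P a (4 * j + 2) ≤ P a (4 * j + 1) + 1 := P_succ_le _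
  have := hj.three_le_two
  have := hj.three_eq
  have := hj.one_le_two
  have : P a (4 * j + 2) ≠ P a (4 * j + 1) := fun h2 => by
    have := hj.three_add_one_of_two_eq h2
    omega
  omega

theorem P_four_mul_add_three_le_two : P a (4 * k + 3) ≤ P a (4 * k + 2) := by
  have : P a (4 * k + 3) ≤ P a (4 * k + 1) + 1 :=
    P_le_of_palFactor (palFactor_add_two (ha k).2.1) (by omega)
  have := P_four_mul_add_one_le_two ha IH
  have : P a (4 * k + 2) ≤ P a (4 * k + 1) + 1 := P_succ_le _
  by_cases h : P a (4 * k + 2) = P a (4 * k + 1)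
  · have := P_four_mul_add_three_of_eq ha IH h
    omega
  · omega

theorem P_four_mul_add_three_eq : P a (4 * k + 3) = P a (4 * (k + 1)) + 1 := by
  obtain ⟨i, hi, hpal, hP⟩ := exists_P_eq_succ (by omega : 0 < 4 * k + 3)
  have : P a (4 * k + 3) ≤ P a (4 * (k + 1)) + 1 := P_le_succ _
  rcases palFactor_cases ha hpal hi with hi1 | ⟨hi3, hmod⟩ | hi4
  · obtain rfl : i = 4 * k + 2 := by omega
    have := P_four_mul_add_three_le_two ha IH
    omega
  · omega
  · obtain ⟨j, rfl, hjk⟩ : ∃ j, i = 4 * j + 1 ∧ j ≤ k := ⟨i / 4, by omega, by omega⟩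
    have : P a (4 * (k + 1)) ≤ P a (4 * j) + 1 :=
      P_le_of_palFactor (hpal.extend_four_mul_add_one ha hjk) (by omega)
    have : P a (4 * j + 1) = P a (4 * j) + 1 := by
      rcases hjk.eq_or_lt with rfl | hjk
      · exact P_four_mul_add_one ha IH
      · exact (IH j hjk).one_eq
    omega

end Induction

theorem blockProfile (k : ℕ) : BlockProfile a k := by
  induction k using Nat.strong_induction_on with
  | _ k IH =>
    exact ⟨P_four_mul_add_one ha IH, P_four_mul_add_one_le_two ha IH,
      P_four_mul_add_three_le_two ha IH, P_four_mul_add_three_eq ha IH,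
      P_four_mul_add_three_of_eq ha IH⟩

end AbbaBlocks

theorem InC.exists_quarters_eq {a : ℕ → α} (hC : InC a) :
    ∃ f : ℕ → α ≃ α, f 0 (a 0) ≠ a 0 ∧ ∀ n, ∀ t < 4 ^ n,
      a (4 ^ n + t) = f n (a t) ∧ a (2 * 4 ^ n + t) = f n (a t) ∧ a (3 * 4 ^ n + t) = a t := by
  obtain ⟨c, f, w, -, hrec, hne, hpre⟩ := hC
  refine ⟨f, fun h => hne 0 ?_, fun n => ?_⟩
  · simp [hpre, h]
  have hsplit := hrec n
  rw [hpre, hpre, show 4 ^ (n + 1) = 4 ^ n + 4 ^ n + 4 ^ n + 4 ^ n by ring] at hsplit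
  simp only [List.range_add, List.map_append, List.map_map] at hsplit
  obtain ⟨h12, h3⟩ := List.append_inj' hsplit (by simp)
  obtain ⟨h1, h2⟩ := List.append_inj' h12 (by simp)
  obtain ⟨-, h1⟩ := List.append_inj' h1 (by simp)
  simp only [List.map_inj_left, List.mem_range, Function.comp_apply] at h1 h2 h3
  intro t ht
  refine ⟨h1 t ht, ?_, ?_⟩
  · rw [← h2 t ht]; congr 1; ring
  · rw [← h3 t ht]; congr 1; ring

theorem AbbaBlock.of_equiv {a : ℕ → α} {t u : ℕ} (g : α ≃ α) (hu : AbbaBlock a u)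
    (h : ∀ r < 4, a (4 * t + r) = g (a (4 * u + r))) : AbbaBlock a t := by
  have h0 := h 0 (by norm_num)
  simp only [add_zero] at h0
  rw [AbbaBlock, h0, h 1 (by norm_num), h 2 (by norm_num), h 3 (by norm_num)]
  exact ⟨g.injective.ne hu.1, congrArg g hu.2.1, congrArg g hu.2.2⟩

theorem InC.abbaBlock {a : ℕ → α} (hC : InC a) (k : ℕ) : AbbaBlock a k := by
  obtain ⟨f, hf0, hf⟩ := hC.exists_quarters_eq
  suffices ∀ n, ∀ t, 4 * t < 4 ^ (n + 1) → AbbaBlock a t from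
    this k k (by rw [pow_succ]; have := Nat.lt_pow_self (n := k) (by norm_num : 1 < 4); omega)
  intro n
  induction n with
  | zero =>
    intro t ht
    obtain rfl : t = 0 := by omega
    obtain ⟨h1, h2, h3⟩ := hf 0 0 (by norm_num)
    simp only [pow_zero, mul_one, add_zero] at h1 h2 h3
    exact ⟨fun h => hf0 (h1 ▸ h).symm, h1.trans h2.symm, h3⟩
  | succ n ih =>
    intro t ht
    rcases Nat.lt_or_ge (4 * t) (4 ^ (n + 1)) with hlt | hge
    · exact ih t hlt
    obtain ⟨q, u, hq1, hq4, hu, htu⟩ : ∃ q u, 1 ≤ q ∧ q < 4 ∧ 4 * u < 4 ^ (n + 1) ∧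
        4 * t = q * 4 ^ (n + 1) + 4 * u := by
      rcases Nat.lt_or_ge (4 * t) (2 * 4 ^ (n + 1)) with h2 | h2
      · exact ⟨1, t - 4 ^ n, by omega⟩
      rcases Nat.lt_or_ge (4 * t) (3 * 4 ^ (n + 1)) with h3 | h3
      · exact ⟨2, t - 2 * 4 ^ n, by omega⟩
      · exact ⟨3, t - 3 * 4 ^ n, by omega⟩
    obtain ⟨g, hg⟩ :
        ∃ g : α ≃ α, ∀ s < 4 ^ (n + 1), a (q * 4 ^ (n + 1) + s) = g (a s) := by
      interval_cases q
      · exact ⟨f (n + 1), fun s hs => by simpa using (hf _ s hs).1⟩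
      · exact ⟨f (n + 1), fun s hs => (hf _ s hs).2.1⟩
      · exact ⟨Equiv.refl α, fun s hs => (hf _ s hs).2.2⟩
    exact (ih u hu).of_equiv g fun r hr => by rw [htu, add_assoc]; exact hg _ (by omega)

end

theorem stmt13 {α : Type*} (a : ℕ → α) (hC : InC a) :
    (∀ n : ℕ, P a (n + 1) ≤ P a n + 1) ∧
    (∀ n : ℕ, P a (n + 1) + 2 = P a (n + 2) + 1 ∧ P a (n + 2) + 1 = P a (n + 3) →
      n % 4 = 3) ∧
    (∀ k : ℕ, P a (4 * k + 1) = P a (4 * k + 4) →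
      P a (4 * k + 2) = P a (4 * k + 4) + 1 ∧ P a (4 * k + 3) = P a (4 * k + 4) + 1) ∧
    (∀ k : ℕ, P a (4 * k + 1) = P a (4 * k + 2) →
      P a (4 * k + 1) = P a (4 * k + 4) + 2) := by
  have hP : ∀ k, BlockProfile a k := blockProfile hC.abbaBlock
  refine ⟨P_succ_le, ?_, fun k h => ?_, fun k h => ?_⟩
  · rintro n ⟨h1, h2⟩
    obtain ⟨k, r, hr, rfl⟩ := exists_eq_four_mul_add n
    obtain ⟨-, -, h32, h34, h21⟩ := hP k
    interval_cases r <;> simp only [add_zero, add_assoc, Nat.reduceAdd, mul_add, mul_one] at * <;>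
      omega
  · obtain ⟨-, -, h32, h34, -⟩ := hP k
    have : P a (4 * k + 2) ≤ P a (4 * k + 1) + 1 := P_succ_le _
    simp only [mul_add, mul_one] at h34
    omega
  · obtain ⟨-, -, -, h34, h21⟩ := hP k
    simp only [mul_add, mul_one] at h34
    have := h21 h.symm
    omega
end
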